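/- arXiv:2107.04625 — 7 statements merged into one kernel-verified Lean document; each statement's English description precedes it below -/
import Mathlib

section
/- Every infinite compact Hausdorff scattered topological space contains a non-trivial convergent sequence, i.e. there exists a sequence (x_n) of points of the space and a point x such that (x_n) converges to x and (x_n) is not eventually constant. -/
open Filter Topology Set

/-!
The non-isolated points of `X` form a closed set, nonempty because an infinite compact space
is not discrete. Scatteredness gives a non-isolated point `a` with an open neighbourhood `U`
in which every other point is isolated; shrink `U` to a compact neighbourhood `K` of `a`.
Outside any neighbourhood of `a`, the set `K` is compact and discrete, hence finite, so an
injective sequence in the infinite set `K` converges to `a` without being eventually constant.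
-/

section Topology

variable {X : Type*} [TopologicalSpace X]

lemma mem_derivedSet_univ {x : X} : x ∈ derivedSet (univ : Set X) ↔ (𝓝[≠] x).NeBot := by
  rw [mem_derivedSet, AccPt, principal_univ, inf_top_eq]

lemma notMem_derivedSet_univ {x : X} : x ∉ derivedSet (univ : Set X) ↔ IsOpen ({x} : Set X) := by
  rw [mem_derivedSet_univ, isOpen_singleton_iff_punctured_nhds, ← not_neBot]

lemma IsCompact.finite_of_forall_isOpen_singleton {s : Set X} (hs : IsCompact s)
    (hiso : ∀ x ∈ s, IsOpen ({x} : Set X)) : s.Finite :=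
  hs.finite <| isDiscrete_iff_forall_mem_exists_isOpen.mpr fun x hx =>
    ⟨{x}, hiso x hx, inter_eq_left.mpr (singleton_subset_iff.mpr hx)⟩

lemma tendsto_cofinite_of_injective_of_isCompact {ι : Type*} {K : Set X} {a : X}
    (hK : IsCompact K) (hiso : ∀ x ∈ K, x ≠ a → IsOpen ({x} : Set X))
    {u : ι → X} (hu : Function.Injective u) (huK : ∀ i, u i ∈ K) :
    Tendsto u cofinite (𝓝 a) := by
  intro W hW
  have haW : a ∈ interior W := mem_interior_iff_mem_nhds.mpr hW
  have hfin : (K \ interior W).Finite :=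
    (hK.diff isOpen_interior).finite_of_forall_isOpen_singleton fun x hx =>
      hiso x hx.1 fun hxa => hx.2 (hxa ▸ haW)
  exact (hfin.preimage hu.injOn).subset fun i hi =>
    ⟨huK i, fun hiW => hi (interior_subset (s := W) hiW)⟩

end Topology

lemma Function.Injective.not_eventually_eq_cofinite {ι α : Type*} [Infinite ι] {u : ι → α}
    (hu : Function.Injective u) (c : α) : ¬∀ᶠ i in cofinite, u i = c := by
  intro hc
  have hsub : {i | u i = c}.Subsingleton := fun i hi j hj => hu (hi.trans hj.symm)
  exact infinite_univ (α := ι) <|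
    (hsub.finite.union (eventually_cofinite.mp hc)).subset fun i _ => em (u i = c)

/-- Every infinite compact Hausdorff scattered space (every nonempty closed subset
has a point isolated in the subspace topology) contains a non-trivial convergent
sequence. -/
theorem scattered_has_nontrivial_convergent_sequence
    {X : Type*} [TopologicalSpace X] [CompactSpace X] [T2Space X] [Infinite X]
    (hscat : ∀ C : Set X, IsClosed C → C.Nonempty →
      ∃ x ∈ C, ∃ U : Set X, IsOpen U ∧ U ∩ C = {x}) :
    ∃ (u : ℕ → X) (a : X), Tendsto u atTop (𝓝 a) ∧
      ¬ ∃ c : X, ∀ᶠ n in atTop, u n = c := by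
  obtain ⟨a, ha, U, hUopen, hUa⟩ := hscat _ (isClosed_derivedSet univ)
    ((exists_nhds_ne_neBot X).imp fun _ => mem_derivedSet_univ.mpr)
  have haU : a ∈ U := (hUa.symm ▸ mem_singleton a : a ∈ U ∩ _).1
  have hiso : ∀ x ∈ U, x ≠ a → IsOpen ({x} : Set X) := fun x hxU hxa =>
    notMem_derivedSet_univ.mp fun hx => hxa (hUa ▸ ⟨hxU, hx⟩ : x ∈ ({a} : Set X))
  obtain ⟨K, hK, hKclosed, hKU⟩ := exists_mem_nhds_isClosed_subset (hUopen.mem_nhds haU)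
  have ha_neBot : (𝓝[≠] a).NeBot := mem_derivedSet_univ.mp ha
  let u := (infinite_of_mem_nhds a hK).natEmbedding
  have hu : Function.Injective (fun n => (u n : X)) := Subtype.val_injective.comp u.injective
  refine ⟨fun n => u n, a, ?_, fun ⟨c, hc⟩ => ?_⟩
  · rw [← Nat.cofinite_eq_atTop]
    exact tendsto_cofinite_of_injective_of_isCompact hKclosed.isCompact
      (fun x hx => hiso x (hKU hx)) hu fun n => (u n).2
  · exact hu.not_eventually_eq_cofinite c (Nat.cofinite_eq_atTop ▸ hc)
end

section
/- Every infinite compact topological space whose topology is the order topology of a linear order on it contains a non-trivial convergent sequence. -/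
/-!
An infinite linear order contains a strictly monotone or a strictly antitone sequence
(infinitary Erdős–Szekeres). Compactness gives the closure of its range a supremum
(resp. infimum), to which the sequence converges; being injective, it is not eventually
constant.
-/

open Filter Topology Set

theorem Function.Injective.not_eventually_eq_const {X : Type*} {u : ℕ → X}
    (hu : Function.Injective u) : ¬ ∃ c : X, ∀ᶠ n in atTop, u n = c := by
  rintro ⟨c, hc⟩
  obtain ⟨N, hN⟩ := hc.exists_forall_of_atTop
  exact N.succ_ne_self (hu ((hN (N + 1) N.le_succ).trans (hN N le_rfl).symm))

section CompactSpace

variable {ι X : Type*} [Preorder ι] [Nonempty ι] [LinearOrder X] [TopologicalSpace X]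
  [OrderTopology X] [CompactSpace X] {u : ι → X}

theorem Monotone.exists_tendsto_of_compactSpace (hu : Monotone u) :
    ∃ a, Tendsto u atTop (𝓝 a) := by
  obtain ⟨a, -, ha⟩ := isClosed_closure.isCompact.exists_isLUB (range_nonempty u).closure
  rw [IsLUB, upperBounds_closure] at ha
  exact ⟨a, tendsto_atTop_isLUB hu ha⟩

theorem Antitone.exists_tendsto_of_compactSpace (hu : Antitone u) :
    ∃ a, Tendsto u atTop (𝓝 a) := by
  obtain ⟨a, -, ha⟩ := isClosed_closure.isCompact.exists_isGLB (range_nonempty u).closure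
  rw [IsGLB, lowerBounds_closure] at ha
  exact ⟨a, tendsto_atTop_isGLB hu ha⟩

end CompactSpace

/-- Every infinite compact space whose topology is the order topology of a linear
order contains a non-trivial convergent sequence. -/
theorem ordered_has_nontrivial_convergent_sequence
    {X : Type*} [LinearOrder X] [TopologicalSpace X] [OrderTopology X]
    [CompactSpace X] [Infinite X] :
    ∃ (u : ℕ → X) (a : X), Tendsto u atTop (𝓝 a) ∧
      ¬ ∃ c : X, ∀ᶠ n in atTop, u n = c := by
  obtain ⟨u, hmono | hanti⟩ := Infinite.exists_strictMono_or_strictAnti X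
  · obtain ⟨a, ha⟩ := hmono.monotone.exists_tendsto_of_compactSpace
    exact ⟨u, a, ha, hmono.injective.not_eventually_eq_const⟩
  · obtain ⟨a, ha⟩ := hanti.antitone.exists_tendsto_of_compactSpace
    exact ⟨u, a, ha, hanti.injective.not_eventually_eq_const⟩
end

section
/- Let X be an infinite compact Hausdorff topological space admitting a base 𝓑 of its topology with the following property: no family 𝓐 of subsets of ℕ with cardinality at most the cardinality of 𝓑 is a splitting family (i.e. for every such family 𝓐 there exists an infinite set B ⊆ ℕ such that for every A ∈ 𝓐, either B ∩ A is finite or B \ A is finite). Then X contains a non-trivial convergent sequence. -/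
open Filter Topology Set

/-- If an infinite compact Hausdorff space `X` admits a base `𝓑` of its topology such
that no family of subsets of `ℕ` of cardinality at most `#𝓑` is a splitting family,
then `X` contains a non-trivial convergent sequence. -/
theorem weight_lt_splitting_number_nontrivial_convergent_sequence
    {X : Type} [TopologicalSpace X] [CompactSpace X] [T2Space X] [Infinite X]
    (𝓑 : Set (Set X)) (hB : TopologicalSpace.IsTopologicalBasis 𝓑)
    (hnosplit : ∀ 𝓐 : Set (Set ℕ), Cardinal.mk 𝓐 ≤ Cardinal.mk 𝓑 →
      ∃ B : Set ℕ, B.Infinite ∧ ∀ A ∈ 𝓐, (B ∩ A).Finite ∨ (B \ A).Finite) :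
    ∃ (u : ℕ → X) (a : X), Tendsto u atTop (𝓝 a) ∧
      ¬ ∃ c : X, ∀ᶠ n in atTop, u n = c := by
  classical
  -- an injective sequence in X
  obtain ⟨u, hu⟩ : ∃ u : ℕ → X, Function.Injective u :=
    ⟨(Infinite.natEmbedding X : ℕ ↪ X), (Infinite.natEmbedding X).injective⟩
  set 𝓐 : Set (Set ℕ) := (fun U : Set X => {n | u n ∈ U}) '' 𝓑 with h𝓐
  obtain ⟨B, hBinf, hBsplit⟩ := hnosplit 𝓐 (Cardinal.mk_image_le)
  -- enumerate B
  set e : ℕ ↪ B := hBinf.natEmbedding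
  set v : ℕ → X := fun k => u (e k) with hv
  have hvinj : Function.Injective v := by
    intro a b hab
    exact e.injective (Subtype.coe_injective (hu hab))
  -- cluster point
  obtain ⟨a, ha⟩ := exists_clusterPt_of_compactSpace (map v atTop)
  have hmcp : MapClusterPt a atTop v := ha
  refine ⟨v, a, ?_, ?_⟩
  · -- convergence
    rw [(hB.nhds_hasBasis (a := a)).tendsto_right_iff]
    rintro U ⟨hU𝓑, haU⟩
    have hA : {n | u n ∈ U} ∈ 𝓐 := ⟨U, hU𝓑, rfl⟩
    have hfreq : ∃ᶠ k in atTop, v k ∈ U :=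
      mapClusterPt_iff_frequently.1 hmcp U (hB.mem_nhds hU𝓑 haU)
    have hinfU : {k | v k ∈ U}.Infinite :=
      Nat.frequently_atTop_iff_infinite.1 hfreq
    rcases hBsplit _ hA with h | h
    · -- B ∩ A finite: contradiction with hinfU
      exfalso
      apply hinfU
      have : {k | v k ∈ U} ⊆ (fun k => (e k : ℕ)) ⁻¹' (B ∩ {n | u n ∈ U}) := by
        intro k hk
        exact ⟨(e k).2, hk⟩
      exact Finite.subset (h.preimage (fun x _ y _ hxy =>
        e.injective (Subtype.coe_injective hxy))) this
    · -- B \ A finite: eventually in U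
      have hfin : {k | v k ∉ U}.Finite := by
        have : {k | v k ∉ U} ⊆ (fun k => (e k : ℕ)) ⁻¹' (B \ {n | u n ∈ U}) := by
          intro k hk
          exact ⟨(e k).2, hk⟩
        exact Finite.subset (h.preimage (fun x _ y _ hxy =>
          e.injective (Subtype.coe_injective hxy))) this
      rcases hfin.bddAbove with ⟨N, hN⟩
      filter_upwards [eventually_gt_atTop N] with k hk
      by_contra hkU
      exact absurd (hN hkU) (not_le.2 hk)
  · -- not eventually constant
    rintro ⟨c, hc⟩
    rcases eventually_atTop.1 hc with ⟨N, hN⟩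
    have h1 : v N = c := hN N le_rfl
    have h2 : v (N + 1) = c := hN (N + 1) (Nat.le_succ N)
    exact Nat.succ_ne_self N (hvinj (h2.trans h1.symm))
end

section
/- Let K be a compact topological space and let F ⊆ K be countably closed, i.e. for every countable set S ⊆ F the closure of S in K is contained in F. Then F, with the subspace topology, is countably compact: every countable open cover of F has a finite subcover. -/
open Set

/-- A countably closed subset of a compact space is countably compact: every countable
open cover has a finite subcover. -/
theorem countablyClosed_countably_compact
    {K : Type*} [TopologicalSpace K] [CompactSpace K]
    (F : Set K)
    (hcc : ∀ S : Set K, S.Countable → S ⊆ F → closure S ⊆ F)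
    (𝒰 : Set (Set K)) (h𝒰 : 𝒰.Countable) (hopen : ∀ U ∈ 𝒰, IsOpen U)
    (hcover : F ⊆ ⋃₀ 𝒰) :
    ∃ 𝒯 ⊆ 𝒰, 𝒯.Finite ∧ F ⊆ ⋃₀ 𝒯 := by
  rcases F.eq_empty_or_nonempty with hF | ⟨x0, hx0⟩
  · exact ⟨∅, empty_subset _, finite_empty, by simp [hF]⟩
  haveI : Nonempty K := ⟨x0⟩
  by_contra h
  push_neg at h
  have hx : ∀ T : Set (Set K), T ⊆ 𝒰 → T.Finite → ∃ x, x ∈ F ∧ x ∉ ⋃₀ T := by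
    intro T hT hTf
    have := h T hT hTf
    rw [Set.not_subset] at this
    obtain ⟨x, hxF, hxT⟩ := this
    exact ⟨x, hxF, hxT⟩
  choose! f hfF hfT using hx
  set S : Set K := f '' {T | T.Finite ∧ T ⊆ 𝒰} with hS
  have hScount : S.Countable := (Set.countable_setOf_finite_subset h𝒰).image f
  have hSF : S ⊆ F := by
    rintro _ ⟨T, ⟨hTf, hT⟩, rfl⟩
    exact hfF T hT hTf
  have hclF : closure S ⊆ F := hcc S hScount hSF
  have hcomp : IsCompact (closure S) := isClosed_closure.isCompact
  have hcov : closure S ⊆ ⋃ U : 𝒰, (U : Set K) := by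
    intro x hx
    obtain ⟨U, hU, hxU⟩ := hcover (hclF hx)
    exact Set.mem_iUnion.2 ⟨⟨U, hU⟩, hxU⟩
  obtain ⟨b, hb⟩ := hcomp.elim_finite_subcover (fun U : 𝒰 => (U : Set K))
    (fun U => hopen U U.2) hcov
  set T : Set (Set K) := Subtype.val '' (b : Set 𝒰) with hT
  have hTsub : T ⊆ 𝒰 := by rintro _ ⟨U, _, rfl⟩; exact U.2
  have hTfin : T.Finite := (b.finite_toSet).image _
  have hmem : f T ∈ S := ⟨T, ⟨hTfin, hTsub⟩, rfl⟩
  have : f T ∈ ⋃₀ T := by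
    have := hb (subset_closure hmem)
    obtain ⟨U, hUb, hxU⟩ := Set.mem_iUnion₂.1 this
    exact ⟨U, ⟨U, hUb, rfl⟩, hxU⟩
  exact hfT T hTsub hTfin this
end

section
/- Let Γ be a set and let Σ(Γ) ⊆ ℝ^Γ (product topology) be the set of functions with countable support. If A ⊆ Σ(Γ) and x ∈ Σ(Γ) lies in the closure of A in ℝ^Γ, then there exists a sequence (x_n) of elements of A converging to x. -/
open Filter Topology Set

section Aux

open scoped Classical

variable {Γ : Type*}

/-- An enumeration of a countable set (total function; junk otherwise). -/
noncomputable def enumOf [Nonempty Γ] (S : Set Γ) : ℕ → Γ :=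
  if h : S.Countable then
    Classical.choose ((h.insert (Classical.arbitrary Γ)).exists_eq_range
      ⟨Classical.arbitrary Γ, Set.mem_insert _ _⟩)
  else fun _ => Classical.arbitrary Γ

lemma subset_range_enumOf [Nonempty Γ] {S : Set Γ} (h : S.Countable) :
    S ⊆ Set.range (enumOf S) := by
  rw [enumOf, dif_pos h]
  have := Classical.choose_spec ((h.insert (Classical.arbitrary Γ)).exists_eq_range
      ⟨Classical.arbitrary Γ, Set.mem_insert _ _⟩)
  intro γ hγ
  rw [← this]
  exact Set.mem_insert_of_mem _ hγ

/-- Pick an element of `A` `ε`-close to `x` on the finite set `F`, if one exists. -/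
noncomputable def pickNear (A : Set (Γ → ℝ)) (x : Γ → ℝ) (F : Finset Γ) (ε : ℝ) : Γ → ℝ :=
  if h : ∃ a ∈ A, ∀ γ ∈ F, |a γ - x γ| < ε then h.choose else x

lemma pickNear_spec {A : Set (Γ → ℝ)} {x : Γ → ℝ} (hclos : x ∈ closure A)
    (F : Finset Γ) {ε : ℝ} (hε : 0 < ε) :
    pickNear A x F ε ∈ A ∧ ∀ γ ∈ F, |pickNear A x F ε γ - x γ| < ε := by
  have h : ∃ a ∈ A, ∀ γ ∈ F, |a γ - x γ| < ε := by
    have hnbhd : {y : Γ → ℝ | ∀ γ ∈ F, |y γ - x γ| < ε} ∈ 𝓝 x := by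
      have : ∀ᶠ y in 𝓝 x, ∀ γ ∈ F, |y γ - x γ| < ε := by
        rw [Filter.eventually_all_finset]
        intro γ _
        have hc : Tendsto (fun y : Γ → ℝ => y γ) (𝓝 x) (𝓝 (x γ)) :=
          ((continuous_apply γ).tendsto x)
        have hball : Metric.ball (x γ) ε ∈ 𝓝 (x γ) := Metric.ball_mem_nhds _ hε
        filter_upwards [hc hball] with y hy
        simpa [Real.dist_eq] using hy
      exact this
    rcases mem_closure_iff_nhds.1 hclos _ hnbhd with ⟨a, ha1, ha2⟩
    exact ⟨a, ha2, ha1⟩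
  rw [pickNear, dif_pos h]
  exact h.choose_spec

/-- The recursively chosen sequence: at step `n`, the first component is an element
of `A` close to `x` on a growing finite set; the second is an enumeration of the
accumulated countable support set. -/
noncomputable def auxSeq [Nonempty Γ] (A : Set (Γ → ℝ)) (x : Γ → ℝ) :
    ℕ → (Γ → ℝ) × (ℕ → Γ)
  | n =>
    let f : ℕ → Γ :=
      enumOf ({γ | x γ ≠ 0} ∪ ⋃ k : Fin n, {γ | (auxSeq A x k).1 γ ≠ 0})
    let F : Finset Γ :=
      (Finset.univ.image fun p : Fin n × Fin (n + 1) => (auxSeq A x p.1).2 p.2) ∪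
        ((Finset.range (n + 1)).image f)
    (pickNear A x F (1 / (n + 1)), f)
  decreasing_by
  all_goals first | exact k.isLt | exact p.1.isLt

/-- The accumulated support set at stage `n`. -/
def Sset [Nonempty Γ] (A : Set (Γ → ℝ)) (x : Γ → ℝ) (n : ℕ) : Set Γ :=
  {γ | x γ ≠ 0} ∪ ⋃ k : Fin n, {γ | (auxSeq A x k).1 γ ≠ 0}

/-- The finite control set at stage `n`. -/
noncomputable def Fset [Nonempty Γ] (A : Set (Γ → ℝ)) (x : Γ → ℝ) (n : ℕ) : Finset Γ :=
  (Finset.univ.image fun p : Fin n × Fin (n + 1) => (auxSeq A x p.1).2 p.2) ∪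
    ((Finset.range (n + 1)).image (enumOf (Sset A x n)))

lemma auxSeq_eq [Nonempty Γ] (A : Set (Γ → ℝ)) (x : Γ → ℝ) (n : ℕ) :
    auxSeq A x n = (pickNear A x (Fset A x n) (1 / (n + 1)), enumOf (Sset A x n)) := by
  rw [auxSeq.eq_def]
  rfl

end Aux

/-- If `A ⊆ Σ(Γ)` (functions with countable support, inside `ℝ^Γ` with the product
topology) and `x ∈ Σ(Γ)` lies in the closure of `A`, then some sequence of elements
of `A` converges to `x`. -/
theorem sigmaProduct_closure_eq_seq_closure
    {Γ : Type*} (A : Set (Γ → ℝ))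
    (hA : A ⊆ {x : Γ → ℝ | {γ : Γ | x γ ≠ 0}.Countable})
    (x : Γ → ℝ) (hx : {γ : Γ | x γ ≠ 0}.Countable)
    (hclos : x ∈ closure A) :
    ∃ u : ℕ → Γ → ℝ, (∀ n, u n ∈ A) ∧ Tendsto u atTop (𝓝 x) := by
  classical
  have hAne : A.Nonempty := by
    by_contra h
    rw [Set.not_nonempty_iff_eq_empty] at h
    simp [h] at hclos
  rcases isEmpty_or_nonempty Γ with hΓ | hΓ
  · obtain ⟨a, ha⟩ := hAne
    have hax : a = x := funext fun γ => isEmptyElim γ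
    exact ⟨fun _ => a, fun _ => ha, hax ▸ tendsto_const_nhds⟩
  -- Notation
  set u : ℕ → Γ → ℝ := fun n => (auxSeq A x n).1 with hu
  have hεpos : ∀ n : ℕ, (0 : ℝ) < 1 / (n + 1) := fun n => by positivity
  have humem : ∀ n, u n ∈ A := by
    intro n
    simp only [hu, auxSeq_eq]
    exact (pickNear_spec hclos _ (hεpos n)).1
  have hSc : ∀ n, (Sset A x n).Countable := by
    intro n
    exact hx.union (Set.countable_iUnion fun k => hA (humem k))
  have hsnd : ∀ n, (auxSeq A x n).2 = enumOf (Sset A x n) := fun n => by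
    rw [auxSeq_eq]
  have hclose : ∀ n, ∀ γ ∈ Fset A x n, |u n γ - x γ| < 1 / (n + 1) := by
    intro n
    simp only [hu, auxSeq_eq]
    exact (pickNear_spec hclos _ (hεpos n)).2
  refine ⟨u, humem, ?_⟩
  rw [tendsto_pi_nhds]
  intro γ
  by_cases hγ : x γ = 0 ∧ ∀ n, u n γ = 0
  · have : (fun n => u n γ) = fun _ => x γ := funext fun n => by rw [hγ.1, hγ.2 n]
    rw [this]
    exact tendsto_const_nhds
  -- γ belongs to some Sset
  have hmem : ∃ m, γ ∈ Sset A x m := by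
    rw [not_and_or] at hγ
    rcases hγ with h | h
    · exact ⟨0, Or.inl h⟩
    · push_neg at h
      obtain ⟨k, hk⟩ := h
      exact ⟨k + 1, Or.inr (Set.mem_iUnion.2 ⟨⟨k, Nat.lt_succ_self k⟩, hk⟩)⟩
  obtain ⟨m, hm⟩ := hmem
  obtain ⟨j, hj⟩ := subset_range_enumOf (hSc m) hm
  -- for n ≥ max m j, γ ∈ Fset A x n
  have hin : ∀ n, max m j ≤ n → γ ∈ Fset A x n := by
    intro n hn
    have hjn : j ≤ n := le_trans (le_max_right m j) hn
    have hmn : m ≤ n := le_trans (le_max_left m j) hn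
    rw [Fset]
    rcases eq_or_lt_of_le hmn with rfl | hlt
    · apply Finset.mem_union_right
      exact Finset.mem_image.2 ⟨j, Finset.mem_range.2 (Nat.lt_succ_of_le hjn), hj⟩
    · apply Finset.mem_union_left
      refine Finset.mem_image.2 ⟨(⟨m, hlt⟩, ⟨j, Nat.lt_succ_of_le hjn⟩), Finset.mem_univ _, ?_⟩
      simp only
      rw [hsnd m]
      exact hj
  have hev : ∀ᶠ n in atTop, |u n γ - x γ| ≤ 1 / ((n : ℝ) + 1) := by
    filter_upwards [eventually_ge_atTop (max m j)] with n hn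
    exact le_of_lt (hclose n γ (hin n hn))
  have h0 : Tendsto (fun n : ℕ => |u n γ - x γ|) atTop (𝓝 0) :=
    squeeze_zero' (Eventually.of_forall fun n => abs_nonneg _) hev
      tendsto_one_div_add_atTop_nhds_zero_nat
  rw [tendsto_iff_dist_tendsto_zero]
  simpa [Real.dist_eq] using h0
end

section
/- Let K be an infinite compact Hausdorff topological space which is a Valdivia compactum: there exist a set Γ, a topological embedding h : K → ℝ^Γ (with ℝ^Γ carrying the product topology), and a dense subset A ⊆ K such that h '' A = (h '' K) ∩ Σ(Γ), where Σ(Γ) is the set of functions Γ → ℝ with countable support. Then K contains a non-trivial convergent sequence. -/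
open Filter Topology Set

/-- An infinite Valdivia compactum — an infinite compact Hausdorff space `K` admitting
a topological embedding `h : K → ℝ^Γ` and a dense subset `A ⊆ K` with
`h '' A = (range h) ∩ Σ(Γ)` — contains a non-trivial convergent sequence. -/
theorem valdivia_nontrivial_convergent_sequence
    {K : Type*} [TopologicalSpace K] [CompactSpace K] [T2Space K] [Infinite K]
    {Γ : Type*} (h : K → Γ → ℝ) (hemb : Topology.IsEmbedding h)
    (A : Set K) (hdense : Dense A)
    (hsigma : h '' A = Set.range h ∩ {x : Γ → ℝ | {γ : Γ | x γ ≠ 0}.Countable}) :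
    ∃ (u : ℕ → K) (a : K), Tendsto u atTop (𝓝 a) ∧
      ¬ ∃ c : K, ∀ᶠ n in atTop, u n = c := by
  classical
  -- `A` is infinite: a finite set is closed, and a closed dense set is everything.
  have hAinf : A.Infinite := by
    by_contra hfin
    rw [Set.not_infinite] at hfin
    have hclosed : IsClosed A := hfin.isClosed
    have : A = Set.univ := by
      rw [← hclosed.closure_eq]; exact hdense.closure_eq
    exact (Set.infinite_univ (α := K)) (this ▸ hfin)
  -- pick a countable infinite subset of `A`
  obtain ⟨b⟩ : Nonempty (ℕ ↪ A) := ⟨hAinf.natEmbedding⟩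
  set bk : ℕ → K := fun n => (b n : K) with hbk
  have hbkinj : Function.Injective bk := Subtype.val_injective.comp b.injective
  have hbkA : ∀ n, bk n ∈ A := fun n => (b n).2
  -- each `h (bk n)` has countable support
  have hsupp : ∀ n, {γ : Γ | h (bk n) γ ≠ 0}.Countable := by
    intro n
    have : h (bk n) ∈ h '' A := ⟨bk n, hbkA n, rfl⟩
    rw [hsigma] at this
    exact this.2
  set S : Set Γ := ⋃ n, {γ : Γ | h (bk n) γ ≠ 0} with hS
  have hScount : S.Countable := Set.countable_iUnion hsupp
  set C : Set K := closure (Set.range bk) with hC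
  have hCcompact : IsCompact C := isClosed_closure.isCompact
  -- every point of `C` has support inside `S`
  have hkey : ∀ x ∈ C, ∀ γ, γ ∉ S → h x γ = 0 := by
    intro x hx γ hγ
    have hcl : IsClosed {y : K | h y γ = 0} := by
      have hcont : Continuous fun y : K => h y γ :=
        (continuous_apply γ).comp hemb.continuous
      exact isClosed_eq hcont continuous_const
    have hsub : Set.range bk ⊆ {y : K | h y γ = 0} := by
      rintro _ ⟨n, rfl⟩
      by_contra hne
      exact hγ (Set.mem_iUnion.2 ⟨n, hne⟩)
    exact (closure_minimal hsub hcl) hx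
  -- map to a countable product
  haveI : Countable ↥S := hScount.to_subtype
  haveI : CompactSpace ↥C := isCompact_iff_compactSpace.mp hCcompact
  set g : ↥C → (↥S → ℝ) := fun x γ => h (x : K) (γ : Γ) with hg
  have hgcont : Continuous g := by
    apply continuous_pi
    intro γ
    exact (continuous_apply (γ : Γ)).comp (hemb.continuous.comp continuous_subtype_val)
  have hginj : Function.Injective g := by
    intro x y hxy
    have : h (x : K) = h (y : K) := by
      funext γ
      by_cases hγ : γ ∈ S
      · exact congrFun hxy ⟨γ, hγ⟩
      · rw [hkey _ x.2 γ hγ, hkey _ y.2 γ hγ]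
    exact Subtype.ext (hemb.injective this)
  have hgemb : Topology.IsEmbedding g := (hgcont.isClosedEmbedding hginj).toIsEmbedding
  haveI : FirstCountableTopology ↥C := hgemb.firstCountableTopology
  -- extract a convergent subsequence of an injective sequence in `C`
  set v : ℕ → ↥C := fun n => ⟨bk n, subset_closure ⟨n, rfl⟩⟩ with hv
  have hvinj : Function.Injective v := by
    intro n m hnm
    apply hbkinj
    show ((v n : K)) = ((v m : K))
    exact congrArg Subtype.val hnm
  obtain ⟨a, φ, hφ, hconv⟩ := SeqCompactSpace.tendsto_subseq v
  refine ⟨fun n => ((v (φ n) : K)), (a : K), ?_, ?_⟩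
  · exact (continuous_subtype_val.tendsto a).comp hconv
  · rintro ⟨c, hc⟩
    obtain ⟨N, hN⟩ := eventually_atTop.mp hc
    have h1 : ((v (φ N) : K)) = c := hN N le_rfl
    have h2 : ((v (φ (N + 1)) : K)) = c := hN (N + 1) (by omega)
    have : v (φ N) = v (φ (N + 1)) := Subtype.ext (h1.trans h2.symm)
    have := hφ.injective (hvinj this)
    omega
end

section
/- In the space βℕ of ultrafilters on ℕ (the Stone–Čech compactification of the discrete space ℕ, i.e. the space Ultrafilter ℕ with the topology whose basic open sets are the cones ⟨A⟩ = {U : A ∈ U} for A ⊆ ℕ), every convergent sequence is trivial: if a sequence (U_n) of ultrafilters on ℕ converges to an ultrafilter U, then (U_n) is eventually constant. -/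
open Filter Topology

/-!
Two distinct ultrafilters are separated by a set, so if `U n → L` with `U n ≠ L`, pick
`S n ∈ U n` with `S n ∉ L`. As `{u | (S n)ᶜ ∈ u}` is a neighbourhood of `L`, a subsequence
can be chosen along which each `S n` misses all later terms; disjointifying the `S n` then yields
pairwise disjoint `A n ∈ U n`. The union `B` of the even-indexed `A n` lies in the even terms and
not in the odd ones, but `{u | B ∈ u}` is clopen, so membership of `B` must stabilise along a
convergent sequence.
-/

namespace Ultrafilter

open Function

variable {α ι : Type*}

theorem eventually_mem_iff_of_tendsto {l : Filter ι} {W : ι → Ultrafilter α}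
    {L : Ultrafilter α} (h : Tendsto W l (𝓝 L)) (s : Set α) :
    ∀ᶠ i in l, (s ∈ W i ↔ s ∈ L) := by
  by_cases hs : s ∈ L
  · filter_upwards [h.eventually ((ultrafilter_isOpen_basic s).mem_nhds hs)] with i hi
    exact iff_of_true hi hs
  · have hsc : sᶜ ∈ L := compl_mem_iff_notMem.mpr hs
    filter_upwards [h.eventually ((ultrafilter_isOpen_basic sᶜ).mem_nhds hsc)] with i hi
    exact iff_of_false (compl_mem_iff_notMem.mp hi) hs

theorem not_tendsto_of_pairwise_disjoint {W : ℕ → Ultrafilter α} {L : Ultrafilter α}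
    {A : ℕ → Set α} (hA : Pairwise (Disjoint on A)) (hAW : ∀ n, A n ∈ W n) :
    ¬Tendsto W atTop (𝓝 L) := by
  intro h
  set B := ⋃ k, A (2 * k)
  have hB_even (k : ℕ) : B ∈ W (2 * k) :=
    mem_of_superset (hAW (2 * k)) (Set.subset_iUnion (fun k ↦ A (2 * k)) k)
  have hB_odd (k : ℕ) : B ∉ W (2 * k + 1) := by
    refine compl_mem_iff_notMem.mp (mem_of_superset (hAW (2 * k + 1)) ?_)
    refine Set.subset_compl_iff_disjoint_right.mpr (Set.disjoint_iUnion_right.mpr fun j ↦ ?_)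
    exact hA (by omega)
  obtain ⟨N, hN⟩ := eventually_atTop.mp (eventually_mem_iff_of_tendsto h B)
  exact hB_odd N (((hN _ (by omega)).trans (hN _ (by omega)).symm).mp (hB_even N))

theorem exists_subseq_pairwise_disjoint_mem {W : ℕ → Ultrafilter α} {L : Ultrafilter α}
    (h : Tendsto W atTop (𝓝 L)) (hne : ∀ n, W n ≠ L) :
    ∃ φ : ℕ → ℕ, StrictMono φ ∧ ∃ A : ℕ → Set α, Pairwise (Disjoint on A) ∧
      ∀ n, A n ∈ W (φ n) := by
  have hsep (n : ℕ) : ∃ s ∈ W n, s ∉ L := Filter.not_le.mp (mt coe_le_coe.mp (hne n).symm)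
  choose S hSW hSL using hsep
  have hlater (m : ℕ) : ∀ᶠ n in atTop, (S m)ᶜ ∈ W n := by
    filter_upwards [eventually_mem_iff_of_tendsto h (S m)] with n hn
    exact compl_mem_iff_notMem.mpr (hn.not.mpr (hSL m))
  obtain ⟨φ, hφ, hφS, -⟩ := hasAntitoneBasis_atTop.subbasis_with_rel hlater
  refine ⟨φ, hφ, disjointed (S ∘ φ), disjoint_disjointed _, fun n ↦ ?_⟩
  rw [disjointed_eq_inter_compl]
  refine inter_mem (hSW (φ n)) ((biInter_mem (Set.finite_Iio n)).mpr fun m hm ↦ ?_)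
  exact hφS hm

end Ultrafilter

/-- In `βℕ`, the space of ultrafilters on `ℕ` with its standard (Stone) topology,
every convergent sequence is eventually constant. -/
theorem betaNat_no_nontrivial_convergent_sequence
    (U : ℕ → Ultrafilter ℕ) (L : Ultrafilter ℕ)
    (hconv : Tendsto U atTop (𝓝 L)) :
    ∃ c : Ultrafilter ℕ, ∀ᶠ n in atTop, U n = c := by
  refine ⟨L, ?_⟩
  by_contra hev
  obtain ⟨ψ, hψ, hψL⟩ := extraction_of_frequently_atTop (not_eventually.mp hev)
  have hconvψ : Tendsto (U ∘ ψ) atTop (𝓝 L) := hconv.comp hψ.tendsto_atTop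
  obtain ⟨φ, hφ, A, hA, hAU⟩ := Ultrafilter.exists_subseq_pairwise_disjoint_mem hconvψ hψL
  exact Ultrafilter.not_tendsto_of_pairwise_disjoint hA hAU (hconvψ.comp hφ.tendsto_atTop)
end
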